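/- arXiv:2106.04278 — 3 statements merged into one kernel-verified Lean document; each statement's English description precedes it below -/
import Mathlib

section
/- Let G be a group with subgroups H and K such that G = HK. Then for all x, y ∈ G, G = H^x K^y, where H^x = x⁻¹Hx and K^y = y⁻¹Ky. -/
open Pointwise

/-
Conjugation by `g` acts on subsets as `S ↦ {g} * S * {g⁻¹}`, so
`H^x K^y = x⁻¹ (H {x y⁻¹} K) y`. Writing `x y⁻¹ = h k` with `h ∈ H`, `k ∈ K`, the middle factor is
`H h k K = H K = G`, and any translate of `G` is `G`.
-/

namespace Subgroup

variable {G : Type*} [Group G]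

theorem coe_map_conj (H : Subgroup G) (g : G) :
    ((H.map (MulAut.conj g).toMonoidHom : Subgroup G) : Set G) = {g} * H * {g⁻¹} := by
  rw [Set.mul_singleton, Set.singleton_mul, Set.image_image, coe_map]
  rfl

theorem mul_singleton_mul_eq_univ {H K : Subgroup G} (h : (H : Set G) * (K : Set G) = Set.univ)
    (g : G) : (H : Set G) * {g} * (K : Set G) = Set.univ := by
  obtain ⟨a, ha, b, hb, rfl⟩ : g ∈ (H : Set G) * (K : Set G) := h ▸ Set.mem_univ g
  rw [← Set.singleton_mul_singleton, ← mul_assoc, subgroup_mul_singleton ha, mul_assoc,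
    singleton_mul_subgroup hb, h]

end Subgroup

theorem stmt_1 {G : Type*} [Group G] (H K : Subgroup G)
    (h : (H : Set G) * (K : Set G) = Set.univ) (x y : G) :
    ((H.map (MulAut.conj x⁻¹).toMonoidHom : Subgroup G) : Set G) *
      ((K.map (MulAut.conj y⁻¹).toMonoidHom : Subgroup G) : Set G) = Set.univ := by
  rw [Subgroup.coe_map_conj, Subgroup.coe_map_conj, inv_inv, inv_inv]
  calc {x⁻¹} * (H : Set G) * {x} * ({y⁻¹} * (K : Set G) * {y})
      = {x⁻¹} * ((H : Set G) * {x * y⁻¹} * K) * {y} := by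
        rw [← Set.singleton_mul_singleton]
        simp only [mul_assoc]
    _ = Set.univ := by
        rw [Subgroup.mul_singleton_mul_eq_univ h, Set.mul_univ (Set.singleton_nonempty _),
          Set.univ_mul (Set.singleton_nonempty _)]
end

section
/- Let G be a group with subgroups H and K such that G = HK. Then for all x, y ∈ G, the intersection H^x ∩ K^y is conjugate in G to H ∩ K; in particular H^x ∩ K^y ≅ H ∩ K. -/
open Pointwise

theorem stmt_2 {G : Type*} [Group G] (H K : Subgroup G)
    (h : (H : Set G) * (K : Set G) = Set.univ) (x y : G) :
    ∃ g : G,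
      H.map (MulAut.conj x⁻¹).toMonoidHom ⊓ K.map (MulAut.conj y⁻¹).toMonoidHom =
        (H ⊓ K).map (MulAut.conj g).toMonoidHom := by
  have hmem : x * y⁻¹ ∈ (H : Set G) * (K : Set G) := by rw [h]; trivial
  obtain ⟨h₁, hh₁, k₁, hk₁, hw⟩ := Set.mem_mul.mp hmem
  rw [SetLike.mem_coe] at hh₁ hk₁
  refine ⟨y⁻¹ * k₁⁻¹, ?_⟩
  ext w
  simp only [Subgroup.mem_inf, Subgroup.mem_map_equiv, MulAut.conj_symm_apply, inv_inv,
    mul_inv_rev]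
  have key : x * w * x⁻¹ = h₁ * (k₁ * (y * w * y⁻¹) * k₁⁻¹) * h₁⁻¹ := by
    have : h₁ * (k₁ * (y * w * y⁻¹) * k₁⁻¹) * h₁⁻¹
        = (h₁ * k₁) * (y * w * y⁻¹) * (h₁ * k₁)⁻¹ := by group
    rw [this, hw]; group
  have hH : x * w * x⁻¹ ∈ H ↔ k₁ * (y * w * y⁻¹) * k₁⁻¹ ∈ H := by
    rw [key, mul_mem_cancel_right (inv_mem hh₁), mul_mem_cancel_left hh₁]
  have hK : y * w * y⁻¹ ∈ K ↔ k₁ * (y * w * y⁻¹) * k₁⁻¹ ∈ K := by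
    rw [mul_mem_cancel_right (inv_mem hk₁), mul_mem_cancel_left hk₁]
  rw [show k₁ * y * w * (y⁻¹ * k₁⁻¹) = k₁ * (y * w * y⁻¹) * k₁⁻¹ by group]
  exact and_congr hH hK
end

section
/- Let G be a group with subgroups H, K, and a normal subgroup L of G with L ⊆ HK (set product), and suppose L is contained in neither H nor K. If G = HK, then HL ∩ KL = (H ∩ KL)(K ∩ HL) as a set product. -/
open Pointwise

theorem stmt_16 {G : Type*} [Group G] (H K L : Subgroup G) [L.Normal]
    (hHK : (L : Set G) ⊆ (H : Set G) * (K : Set G)) (hH : ¬ L ≤ H) (hK : ¬ L ≤ K)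
    (h : (H : Set G) * (K : Set G) = Set.univ) :
    ((H ⊔ L : Subgroup G) : Set G) ∩ ((K ⊔ L : Subgroup G) : Set G) =
      ((H : Set G) ∩ ((K ⊔ L : Subgroup G) : Set G)) *
        ((K : Set G) ∩ ((H ⊔ L : Subgroup G) : Set G)) := by
  ext x
  constructor
  · rintro ⟨hx1, hx2⟩
    have hx1' : x ∈ (H : Set G) * (L : Set G) := by
      rw [← Subgroup.mul_normal H L]; exact hx1
    obtain ⟨a, ha, l, hl, rfl⟩ := hx1'
    obtain ⟨h', hh', k, hk', rfl⟩ := hHK hl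
    have hxHL : a * (h' * k) ∈ H ⊔ L :=
      mul_mem ((le_sup_left : H ≤ H ⊔ L) ha) ((le_sup_right : L ≤ H ⊔ L) hl)
    refine ⟨a * h', ⟨mul_mem ha hh', ?_⟩, k, ⟨hk', ?_⟩, mul_assoc _ _ _⟩
    · have he : a * h' = (a * (h' * k)) * k⁻¹ := by group
      rw [SetLike.mem_coe, he]
      exact mul_mem hx2 (inv_mem ((le_sup_left : K ≤ K ⊔ L) hk'))
    · have he : k = (a * h')⁻¹ * (a * (h' * k)) := by group
      rw [SetLike.mem_coe, he]
      exact mul_mem (inv_mem (mul_mem ((le_sup_left : H ≤ H ⊔ L) ha)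
        ((le_sup_left : H ≤ H ⊔ L) hh'))) hxHL
  · rintro ⟨a, ⟨ha, ha2⟩, b, ⟨hb, hb2⟩, rfl⟩
    exact ⟨mul_mem ((le_sup_left : H ≤ H ⊔ L) ha) hb2,
      mul_mem ha2 ((le_sup_left : K ≤ K ⊔ L) hb)⟩
end
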